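/- arXiv:0711.3666 — 3 statements merged into one kernel-verified Lean document; each statement's English description precedes it below -/
import Mathlib

section
/- Let $t_0<t_1$, and let $A_1, A_2 : [t_0,t_1]\to\mathbb{R}^{n\times n}$ be continuous matrix functions. Suppose there exists a continuously differentiable symmetric matrix function $K^0(t)$ such that the symmetric matrix $N(t) := (K^0)'(t) - A_2^0(t) - \big(\tfrac12 A_1(t) - K^0(t)\big)\big(\tfrac12 A_1(t)^\top - K^0(t)\big)$ is positive definite for all $t\in[t_0,t_1]$, where $A_2^0 = \tfrac12(A_2 + A_2^\top)$. Then the only $C^2$ solution $x:[t_0,t_1]\to\mathbb{R}^n$ of $x'' + A_1(t)x' + A_2(t)x = 0$ with $x(t_0)=x(t_1)=0$ is $x\equiv 0$. -/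
/-!
Along a solution `x`, the Lyapunov function `g = x ⬝ x' + x ⬝ K⁰ x` has derivative
`|x' - (½A₁ᵀ - K⁰) x|² + x ⬝ N x ≥ 0` (complete the square using the equation and the symmetry of
`K⁰`). Hence `g` is monotone, and since it vanishes at both endpoints it vanishes identically, so
its derivative does too; positive definiteness of `N` then forces `x = 0`.
-/

open Matrix Set Filter Topology

section Calculus

variable {ι : Type*} [Fintype ι] {t : ℝ}

theorem HasDerivAt.dotProduct {u v : ℝ → ι → ℝ} {u' v' : ι → ℝ}
    (hu : HasDerivAt u u' t) (hv : HasDerivAt v v' t) :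
    HasDerivAt (fun s => u s ⬝ᵥ v s) (u' ⬝ᵥ v t + u t ⬝ᵥ v') t := by
  simp only [_root_.dotProduct, ← Finset.sum_add_distrib]
  exact HasDerivAt.fun_sum fun i _ => (hasDerivAt_pi.mp hu i).mul (hasDerivAt_pi.mp hv i)

theorem HasDerivAt.matrix_mulVec {K : ℝ → Matrix ι ι ℝ} {K' : Matrix ι ι ℝ}
    {v : ℝ → ι → ℝ} {v' : ι → ℝ}
    (hK : ∀ i j, HasDerivAt (fun s => K s i j) (K' i j) t) (hv : HasDerivAt v v' t) :
    HasDerivAt (fun s => K s *ᵥ v s) (K' *ᵥ v t + K t *ᵥ v') t := by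
  refine hasDerivAt_pi.mpr fun i => ?_
  simp only [mulVec, _root_.dotProduct, Pi.add_apply, ← Finset.sum_add_distrib]
  exact HasDerivAt.fun_sum fun j _ => (hK i j).mul (hasDerivAt_pi.mp hv j)

theorem ContinuousOn.dotProduct {s : Set ℝ} {u v : ℝ → ι → ℝ}
    (hu : ContinuousOn u s) (hv : ContinuousOn v s) : ContinuousOn (fun t => u t ⬝ᵥ v t) s :=
  (continuous_fst.dotProduct continuous_snd).comp_continuousOn (hu.prodMk hv)

theorem ContinuousOn.matrix_mulVec {s : Set ℝ} {K : ℝ → Matrix ι ι ℝ} {v : ℝ → ι → ℝ}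
    (hK : ContinuousOn K s) (hv : ContinuousOn v s) : ContinuousOn (fun t => K t *ᵥ v t) s :=
  (continuous_fst.matrix_mulVec continuous_snd).comp_continuousOn (hK.prodMk hv)

end Calculus

section Interval

variable {E : Type*} [NormedAddCommGroup E] [NormedSpace ℝ E] {a b t : ℝ}

theorem ContDiffOn.hasDerivAt_derivWithin_Icc {x : ℝ → E} (hx : ContDiffOn ℝ 2 x (Icc a b))
    (ht : t ∈ Ioo a b) : HasDerivAt (derivWithin x (Icc a b)) (deriv (deriv x) t) t := by
  have hx' : ContDiffOn ℝ 1 (derivWithin x (Icc a b)) (Icc a b) :=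
    hx.derivWithin (uniqueDiffOn_Icc (ht.1.trans ht.2)) (by norm_num)
  have hderiv_eq : derivWithin x (Icc a b) =ᶠ[𝓝 t] deriv x := by
    filter_upwards [Ioo_mem_nhds ht.1 ht.2] with u hu
    exact derivWithin_of_mem_nhds (Icc_mem_nhds hu.1 hu.2)
  rw [← hderiv_eq.deriv_eq]
  exact ((hx'.differentiableOn one_ne_zero t (Ioo_subset_Icc_self ht)).differentiableAt
    (Icc_mem_nhds ht.1 ht.2)).hasDerivAt

theorem eq_zero_of_hasDerivAt_of_nonneg_of_eq {g G : ℝ → ℝ} (hg : ContinuousOn g (Icc a b))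
    (hgG : ∀ t ∈ Ioo a b, HasDerivAt g (G t) t) (hG : ∀ t ∈ Ioo a b, 0 ≤ G t)
    (hab : g a = g b) (ht : t ∈ Ioo a b) : G t = 0 := by
  have hmono : MonotoneOn g (Icc a b) :=
    monotoneOn_of_hasDerivWithinAt_nonneg (convex_Icc a b) hg
      (by simpa only [interior_Icc] using fun t ht => (hgG t ht).hasDerivWithinAt)
      (by simpa only [interior_Icc] using hG)
  have hab' : a ≤ b := (ht.1.trans ht.2).le
  have hconst : g =ᶠ[𝓝 t] fun _ => g a := by
    filter_upwards [Ioo_mem_nhds ht.1 ht.2] with u hu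
    have hu' := Ioo_subset_Icc_self hu
    exact le_antisymm (hab ▸ hmono hu' (right_mem_Icc.mpr hab') hu'.2)
      (hmono (left_mem_Icc.mpr hab') hu' hu'.1)
  exact (hgG t ht).unique (hconst.hasDerivAt_iff.mpr (hasDerivAt_const t _))

end Interval

section Riccati

variable {ι : Type*} [Fintype ι]

noncomputable def riccatiMatrix (A1 A2 K K' : Matrix ι ι ℝ) : Matrix ι ι ℝ :=
  K' - (1 / 2 : ℝ) • (A2 + A2ᵀ) - ((1 / 2 : ℝ) • A1 - K) * ((1 / 2 : ℝ) • A1ᵀ - K)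

theorem dotProduct_riccati_eq {A1 A2 K K' : Matrix ι ι ℝ} (hK : Kᵀ = K) (a b : ι → ℝ) :
    b ⬝ᵥ b + a ⬝ᵥ (-(A1 *ᵥ b) - A2 *ᵥ a) + (b ⬝ᵥ (K *ᵥ a) + a ⬝ᵥ (K' *ᵥ a + K *ᵥ b))
      = (b - ((1 / 2 : ℝ) • A1ᵀ - K) *ᵥ a) ⬝ᵥ (b - ((1 / 2 : ℝ) • A1ᵀ - K) *ᵥ a)
        + a ⬝ᵥ (riccatiMatrix A1 A2 K K' *ᵥ a) := by
  have hmove : ∀ (M : Matrix ι ι ℝ) (u v : ι → ℝ), (M *ᵥ u) ⬝ᵥ v = u ⬝ᵥ (Mᵀ *ᵥ v) := by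
    intro M u v
    rw [dotProduct_mulVec, vecMul_transpose]
  have hswap : ∀ M : Matrix ι ι ℝ, a ⬝ᵥ (M *ᵥ b) = b ⬝ᵥ (Mᵀ *ᵥ a) := by
    intro M
    rw [dotProduct_comm, hmove]
  have hA2 : a ⬝ᵥ (A2ᵀ *ᵥ a) = a ⬝ᵥ (A2 *ᵥ a) := by rw [← hmove, dotProduct_comm]
  simp only [riccatiMatrix, sub_mulVec, add_mulVec, smul_mulVec, dotProduct_sub, sub_dotProduct,
    dotProduct_add, dotProduct_neg, dotProduct_smul, smul_dotProduct, smul_eq_mul, mulVec_mulVec,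
    hmove, hswap, transpose_transpose, hK, Matrix.mul_sub, Matrix.sub_mul, Matrix.mul_smul,
    Matrix.smul_mul, hA2]
  ring

theorem hasDerivAt_riccati_lyapunov {x v : ℝ → ι → ℝ} {v' : ι → ℝ} {K : ℝ → Matrix ι ι ℝ}
    {A1 A2 K' : Matrix ι ι ℝ} {t : ℝ} (hK : (K t)ᵀ = K t)
    (hK' : ∀ i j, HasDerivAt (fun s => K s i j) (K' i j) t)
    (hx : HasDerivAt x (v t) t) (hv : HasDerivAt v v' t)
    (hode : v' + A1 *ᵥ v t + A2 *ᵥ x t = 0) :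
    HasDerivAt (fun s => x s ⬝ᵥ v s + x s ⬝ᵥ (K s *ᵥ x s))
      ((v t - ((1 / 2 : ℝ) • A1ᵀ - K t) *ᵥ x t) ⬝ᵥ (v t - ((1 / 2 : ℝ) • A1ᵀ - K t) *ᵥ x t)
        + x t ⬝ᵥ (riccatiMatrix A1 A2 (K t) K' *ᵥ x t)) t := by
  have hv' : v' = -(A1 *ᵥ v t) - A2 *ᵥ x t := by
    rw [← sub_eq_zero, ← hode]
    abel
  rw [← dotProduct_riccati_eq hK, ← hv']
  exact (hx.dotProduct hv).add (hx.dotProduct (hx.matrix_mulVec hK'))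

end Riccati

theorem stmt_2_general (n : ℕ) (t0 t1 : ℝ) (ht : t0 < t1)
    (A1 A2 : ℝ → Matrix (Fin n) (Fin n) ℝ)
    (K0 K0' : ℝ → Matrix (Fin n) (Fin n) ℝ)
    (hK0sym : ∀ t ∈ Set.Icc t0 t1, (K0 t)ᵀ = K0 t)
    (hK0deriv : ∀ t ∈ Set.Icc t0 t1, ∀ i j, HasDerivAt (fun s => K0 s i j) (K0' t i j) t)
    (hN : ∀ t ∈ Set.Icc t0 t1, ∀ ξ : Fin n → ℝ, ξ ≠ 0 →
      0 < ξ ⬝ᵥ ((K0' t - (1 / 2 : ℝ) • (A2 t + (A2 t)ᵀ)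
        - ((1 / 2 : ℝ) • A1 t - K0 t) * ((1 / 2 : ℝ) • (A1 t)ᵀ - K0 t)) *ᵥ ξ))
    (x : ℝ → (Fin n → ℝ))
    (hx : ContDiffOn ℝ 2 x (Set.Icc t0 t1))
    (hode : ∀ t ∈ Set.Icc t0 t1,
      deriv (deriv x) t + A1 t *ᵥ deriv x t + A2 t *ᵥ x t = 0)
    (hbc0 : x t0 = 0) (hbc1 : x t1 = 0) :
    ∀ t ∈ Set.Icc t0 t1, x t = 0 := by
  set v := derivWithin x (Icc t0 t1)
  set w := fun t => v t - ((1 / 2 : ℝ) • (A1 t)ᵀ - K0 t) *ᵥ x t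
  have hK0 : ContinuousOn K0 (Icc t0 t1) := fun t hts =>
    continuousAt_pi.mpr (fun i => continuousAt_pi.mpr fun j =>
      (hK0deriv t hts i j).continuousAt) |>.continuousWithinAt
  have hg : ContinuousOn (fun t => x t ⬝ᵥ v t + x t ⬝ᵥ (K0 t *ᵥ x t)) (Icc t0 t1) :=
    (hx.continuousOn.dotProduct (hx.continuousOn_derivWithin (uniqueDiffOn_Icc ht)
      (by norm_num))).add (hx.continuousOn.dotProduct (hK0.matrix_mulVec hx.continuousOn))
  have hgG : ∀ t ∈ Ioo t0 t1, HasDerivAt (fun t => x t ⬝ᵥ v t + x t ⬝ᵥ (K0 t *ᵥ x t))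
      (w t ⬝ᵥ w t + x t ⬝ᵥ (riccatiMatrix (A1 t) (A2 t) (K0 t) (K0' t) *ᵥ x t)) t := by
    intro t htI
    have hts := Ioo_subset_Icc_self htI
    have hv : v t = deriv x t := derivWithin_of_mem_nhds (Icc_mem_nhds htI.1 htI.2)
    exact hasDerivAt_riccati_lyapunov (hK0sym t hts) (hK0deriv t hts)
      ((hx.differentiableOn two_ne_zero t hts).hasDerivWithinAt.hasDerivAt
        (Icc_mem_nhds htI.1 htI.2)) (hx.hasDerivAt_derivWithin_Icc htI) (hv ▸ hode t hts)
  have hw : ∀ t, 0 ≤ w t ⬝ᵥ w t := fun t => Fintype.sum_nonneg fun _ => mul_self_nonneg _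
  have hNpos : ∀ t ∈ Icc t0 t1, x t ≠ 0 →
      0 < x t ⬝ᵥ (riccatiMatrix (A1 t) (A2 t) (K0 t) (K0' t) *ᵥ x t) := fun t hts => hN t hts (x t)
  have hNnonneg : ∀ t ∈ Ioo t0 t1,
      0 ≤ x t ⬝ᵥ (riccatiMatrix (A1 t) (A2 t) (K0 t) (K0' t) *ᵥ x t) := fun t htI =>
    (eq_or_ne (x t) 0).elim (fun hxt => by simp [hxt]) (hNpos t (Ioo_subset_Icc_self htI) · |>.le)
  intro t hts
  rcases hts.1.eq_or_lt with rfl | h0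
  · exact hbc0
  rcases hts.2.eq_or_lt with rfl | h1
  · exact hbc1
  by_contra hxt
  have hzero := eq_zero_of_hasDerivAt_of_nonneg_of_eq hg hgG
    (fun s hs => add_nonneg (hw s) (hNnonneg s hs)) (by simp [hbc0, hbc1]) ⟨h0, h1⟩
  linarith [hw t, hNpos t hts hxt]

/-- Hartman–Wintner criterion: if there is a `C¹` symmetric matrix `K⁰(t)` such that
`N := (K⁰)' - ½(A₂+A₂ᵀ) - (½A₁-K⁰)(½A₁ᵀ-K⁰)` is positive definite on `[t₀,t₁]`, then the
only `C²` solution of `x'' + A₁x' + A₂x = 0` with `x(t₀)=x(t₁)=0` is `x ≡ 0`. -/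
theorem stmt_2 (n : ℕ) (t0 t1 : ℝ) (ht : t0 < t1)
    (A1 A2 : ℝ → Matrix (Fin n) (Fin n) ℝ)
    (hA1 : ∀ i j, ContinuousOn (fun t => A1 t i j) (Set.Icc t0 t1))
    (hA2 : ∀ i j, ContinuousOn (fun t => A2 t i j) (Set.Icc t0 t1))
    (K0 K0' : ℝ → Matrix (Fin n) (Fin n) ℝ)
    (hK0sym : ∀ t ∈ Set.Icc t0 t1, (K0 t)ᵀ = K0 t)
    (hK0deriv : ∀ t ∈ Set.Icc t0 t1, ∀ i j, HasDerivAt (fun s => K0 s i j) (K0' t i j) t)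
    (hK0cont : ∀ i j, ContinuousOn (fun t => K0' t i j) (Set.Icc t0 t1))
    (hN : ∀ t ∈ Set.Icc t0 t1, ∀ ξ : Fin n → ℝ, ξ ≠ 0 →
      0 < ξ ⬝ᵥ ((K0' t - (1 / 2 : ℝ) • (A2 t + (A2 t)ᵀ)
        - ((1 / 2 : ℝ) • A1 t - K0 t) * ((1 / 2 : ℝ) • (A1 t)ᵀ - K0 t)) *ᵥ ξ))
    (x : ℝ → (Fin n → ℝ))
    (hx : ContDiffOn ℝ 2 x (Set.Icc t0 t1))
    (hode : ∀ t ∈ Set.Icc t0 t1,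
      deriv (deriv x) t + A1 t *ᵥ deriv x t + A2 t *ᵥ x t = 0)
    (hbc0 : x t0 = 0) (hbc1 : x t1 = 0) :
    ∀ t ∈ Set.Icc t0 t1, x t = 0 :=
  stmt_2_general n t0 t1 ht A1 A2 K0 K0' hK0sym hK0deriv hN x hx hode hbc0 hbc1
end

section
/- Let $\gamma>1$, $b>0$, and let $(u,v,\rho)$ be the downstream state behind the self-similar shock: $u=\frac{\tau}{b+\tau}$, $v=\frac{b\tau}{b+\tau}$, $\rho=\frac{b+\tau}{\tau(1-b\tau)}\rho_\infty$, with $\nu=\rho_\infty^{\gamma-1}$ and $\alpha_1\nu^{1/(\gamma-1)}\le\tau\le\alpha_2\nu^{1/(\gamma-1)}$. Define $\alpha = \rho\big(u - \frac{\rho_\infty}{\rho} + (u-1)(1-u^2\rho^{1-\gamma}) - uv^2\rho^{1-\gamma}\big)$ and $\beta = \rho\big(-(u-1)uv\rho^{1-\gamma} + v + v(1-v^2\rho^{1-\gamma})\big)$. Then there exist constants $C_1,C_2>0$ depending only on $\gamma$ and $b$ such that for all sufficiently small $\nu>0$: $|\alpha|\ge C_1$ and $|\beta/\alpha| \le C_2\,\nu^{\frac{1}{\gamma-1}}$.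 -/
/-!
Behind the shock `b ρ∞ ≤ τ ρ`, so for `τ ≤ α₂ ν^{1/(γ-1)}` the density stays above `b / α₂`,
while `u`, `v` and `ρ∞ / ρ` are all `O(τ)`. Hence `α / ρ = -1 + O(τ)` is bounded away from zero,
whereas `β = ρ v (2 + (1 - u) u ρ^{1-γ} - v² ρ^{1-γ})` is `O(ρ τ)`; the factor `ρ` cancels in
`β / α`, leaving `O(τ) = O(ν^{1/(γ-1)})`.
-/

open Real

namespace SelfSimilarShock

/-- `α = ρ * alphaFactor u v (ρ∞ / ρ) ρ^{1-γ}`. -/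
def alphaFactor (u v r q : ℝ) : ℝ :=
  u - r + (u - 1) * (1 - u ^ 2 * q) - u * v ^ 2 * q

/-- `β = ρ * betaFactor u v ρ^{1-γ}`. -/
def betaFactor (u v q : ℝ) : ℝ :=
  -(u - 1) * u * v * q + v + v * (1 - v ^ 2 * q)

lemma sq_mul_le_of_le_one {v q M : ℝ} (hv0 : 0 ≤ v) (hv1 : v ≤ 1) (hq0 : 0 ≤ q) (hqM : q ≤ M) :
    v ^ 2 * q ≤ M :=
  (mul_le_of_le_one_left hq0 (pow_le_one₀ hv0 hv1)).trans hqM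

lemma one_sub_mul_self_mul_le {u q M : ℝ} (hq0 : 0 ≤ q) (hqM : q ≤ M) :
    (1 - u) * u * q ≤ M :=
  (mul_le_of_le_one_left hq0 (by nlinarith [sq_nonneg (u - 1 / 2)])).trans hqM

lemma abs_alphaFactor_add_one_le {u v r q M : ℝ} (hu0 : 0 ≤ u) (hu1 : u ≤ 1) (hv0 : 0 ≤ v)
    (hv1 : v ≤ 1) (hq0 : 0 ≤ q) (hqM : q ≤ M) (hr : 0 ≤ r) :
    |alphaFactor u v r q + 1| ≤ (2 + M) * u + r := by
  have hcubic : 0 ≤ u ^ 2 * (1 - u) * q := by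
    have : 0 ≤ 1 - u := by linarith
    positivity
  have hcubic_le : u ^ 2 * (1 - u) * q ≤ u * M := by
    have := mul_le_mul_of_nonneg_left (one_sub_mul_self_mul_le (u := u) hq0 hqM) hu0
    linarith [show u ^ 2 * (1 - u) * q = u * ((1 - u) * u * q) by ring]
  have hv2 : u * v ^ 2 * q ≤ u * M := by
    rw [mul_assoc]
    exact mul_le_mul_of_nonneg_left (sq_mul_le_of_le_one hv0 hv1 hq0 hqM) hu0
  have hv2' : 0 ≤ u * v ^ 2 * q := by positivity
  have hexpand : alphaFactor u v r q + 1 = 2 * u - r + u ^ 2 * (1 - u) * q - u * v ^ 2 * q := by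
    unfold alphaFactor; ring
  rw [hexpand, abs_le]
  constructor <;> nlinarith

lemma abs_betaFactor_le {u v q M : ℝ} (hu0 : 0 ≤ u) (hu1 : u ≤ 1) (hv0 : 0 ≤ v) (hv1 : v ≤ 1)
    (hq0 : 0 ≤ q) (hqM : q ≤ M) :
    |betaFactor u v q| ≤ (2 + M) * v := by
  have hfactor : betaFactor u v q = v * (2 + (1 - u) * u * q - v ^ 2 * q) := by
    unfold betaFactor; ring
  have hu_mid := one_sub_mul_self_mul_le (u := u) hq0 hqM
  have hu_mid' : 0 ≤ (1 - u) * u * q := by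
    have : 0 ≤ 1 - u := by linarith
    positivity
  have hv_sq := sq_mul_le_of_le_one hv0 hv1 hq0 hqM
  have hv_sq' : 0 ≤ v ^ 2 * q := by positivity
  rw [hfactor, abs_mul, abs_of_nonneg hv0, mul_comm]
  exact mul_le_mul_of_nonneg_right (abs_le.2 ⟨by linarith, by linarith⟩) hv0

lemma one_half_le_abs_of_abs_add_one_le {a : ℝ} (h : |a + 1| ≤ 1 / 2) : 1 / 2 ≤ |a| := by
  rw [abs_le] at h
  rw [le_abs]
  right
  linarith

lemma mul_le_mul_downstream_density {b τ ρinf : ℝ} (hb : 0 < b) (hτ : 0 < τ) (hbτ : b * τ < 1)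
    (hρinf : 0 ≤ ρinf) :
    b * ρinf ≤ τ * ((b + τ) / (τ * (1 - b * τ)) * ρinf) := by
  have hd : 0 < 1 - b * τ := sub_pos.2 hbτ
  have hcancel : τ * ((b + τ) / (τ * (1 - b * τ)) * ρinf) = (b + τ) / (1 - b * τ) * ρinf := by
    field_simp
  rw [hcancel]
  refine mul_le_mul_of_nonneg_right ?_ hρinf
  rw [le_div_iff₀ hd]
  nlinarith [mul_pos hb hτ]

theorem coefficient_estimates {γ b α2 ρinf τ u v ρ : ℝ} (hγ : 1 ≤ γ) (hb : 0 < b) (hα2 : 0 < α2)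
    (hρinf : 0 < ρinf) (hτ : 0 < τ) (hτ_le : τ ≤ α2 * ρinf) (hτ1 : τ ≤ 1) (hbτ : b * τ < 1)
    (hsmall : (3 + (b / α2) ^ (1 - γ)) * τ ≤ b / 2)
    (hu : u = τ / (b + τ)) (hv : v = b * τ / (b + τ))
    (hρ : ρ = (b + τ) / (τ * (1 - b * τ)) * ρinf) :
    b / (2 * α2) ≤ |ρ * alphaFactor u v (ρinf / ρ) (ρ ^ (1 - γ))| ∧
      |ρ * betaFactor u v (ρ ^ (1 - γ)) / (ρ * alphaFactor u v (ρinf / ρ) (ρ ^ (1 - γ)))| ≤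
        2 * (2 + (b / α2) ^ (1 - γ)) * α2 * ρinf := by
  set M := (b / α2) ^ (1 - γ)
  have hbρ : b * ρinf ≤ τ * ρ := hρ ▸ mul_le_mul_downstream_density hb hτ hbτ hρinf.le
  have hρ0 : 0 < ρ := by
    have := sub_pos.2 hbτ
    rw [hρ]; positivity
  have hρ_ge : b / α2 ≤ ρ := by
    rw [div_le_iff₀ hα2]
    nlinarith [mul_le_mul_of_nonneg_right hτ_le hρ0.le]
  have hq0 : 0 ≤ ρ ^ (1 - γ) := rpow_nonneg hρ0.le _
  have hqM : ρ ^ (1 - γ) ≤ M := rpow_le_rpow_of_nonpos (by positivity) hρ_ge (by linarith)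
  have hbτ' : 0 < b + τ := by linarith
  have hu0 : 0 ≤ u := by rw [hu]; positivity
  have hu1 : u ≤ 1 := by rw [hu, div_le_one hbτ']; linarith
  have huτ : u ≤ τ / b := by rw [hu]; exact div_le_div_of_nonneg_left hτ.le hb (by linarith)
  have hv0 : 0 ≤ v := by rw [hv]; positivity
  have hvτ : v ≤ τ := by rw [hv, div_le_iff₀ hbτ']; nlinarith
  have hr0 : 0 ≤ ρinf / ρ := by positivity
  have hrτ : ρinf / ρ ≤ τ / b := by rw [div_le_div_iff₀ hρ0 hb]; linarith
  have hA : |alphaFactor u v (ρinf / ρ) (ρ ^ (1 - γ)) + 1| ≤ 1 / 2 :=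
    calc _ ≤ (2 + M) * u + ρinf / ρ :=
          abs_alphaFactor_add_one_le hu0 hu1 hv0 (hvτ.trans hτ1) hq0 hqM hr0
      _ ≤ (2 + M) * (τ / b) + τ / b := by gcongr
      _ = (3 + M) * τ / b := by ring
      _ ≤ 1 / 2 := by rw [div_le_iff₀ hb]; linarith
  have hA_half := one_half_le_abs_of_abs_add_one_le hA
  have hB := abs_betaFactor_le hu0 hu1 hv0 (hvτ.trans hτ1) hq0 hqM
  constructor
  · rw [abs_mul, abs_of_pos hρ0]
    calc b / (2 * α2) = b / α2 * (1 / 2) := by ring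
      _ ≤ ρ * |alphaFactor u v (ρinf / ρ) (ρ ^ (1 - γ))| := by gcongr
  · rw [mul_div_mul_left _ _ hρ0.ne', abs_div]
    calc _ ≤ (2 + M) * v / (1 / 2) := div_le_div₀ (by positivity) hB (by norm_num) hA_half
      _ = 2 * (2 + M) * v := by ring
      _ ≤ 2 * (2 + M) * α2 * ρinf := by
          rw [mul_assoc _ α2]; gcongr; exact hvτ.trans hτ_le

end SelfSimilarShock

open SelfSimilarShock in
/-- Estimates on the coefficients `(α,β) = ∇₍ᵤ,ᵥ₎G` of the linearized Rankine–Hugoniot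
condition at the background downstream state: there exist `C₁, C₂ > 0` depending only on
`γ, b` such that for all sufficiently small `ν > 0`, `|α| ≥ C₁` and
`|β/α| ≤ C₂ ν^{1/(γ-1)}`. -/
theorem stmt_14 (γ b α1 α2 : ℝ) (hγ : 1 < γ) (hb : 0 < b) (hα1 : 0 < α1) (hα12 : α1 ≤ α2) :
    ∃ C1 > (0 : ℝ), ∃ C2 > (0 : ℝ), ∃ ν0 > (0 : ℝ), ∀ ν ∈ Set.Ioc (0 : ℝ) ν0, ∀ τ : ℝ,
      α1 * ν ^ (1 / (γ - 1)) ≤ τ → τ ≤ α2 * ν ^ (1 / (γ - 1)) →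
      ∀ u v ρ ρinf αc βc : ℝ,
        ρinf = ν ^ (1 / (γ - 1)) →
        u = τ / (b + τ) → v = b * τ / (b + τ) →
        ρ = (b + τ) / (τ * (1 - b * τ)) * ρinf →
        αc = ρ * (u - ρinf / ρ + (u - 1) * (1 - u ^ 2 * ρ ^ (1 - γ))
              - u * v ^ 2 * ρ ^ (1 - γ)) →
        βc = ρ * (-(u - 1) * u * v * ρ ^ (1 - γ) + v + v * (1 - v ^ 2 * ρ ^ (1 - γ))) →
        C1 ≤ |αc| ∧ |βc / αc| ≤ C2 * ν ^ (1 / (γ - 1)) := by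
  have hα2 : 0 < α2 := hα1.trans_le hα12
  set M := (b / α2) ^ (1 - γ)
  set τ0 := min (min 1 (1 / (2 * b))) (b / (2 * (3 + M)))
  refine ⟨b / (2 * α2), by positivity, 2 * (2 + M) * α2, by positivity,
    (τ0 / α2) ^ (γ - 1), by positivity, ?_⟩
  rintro ν ⟨hν, hνν0⟩ τ hτl hτu u v ρ ρinf αc βc hρinf hu hv hρ rfl rfl
  rw [← hρinf] at hτl hτu ⊢
  have hρinf_pos : 0 < ρinf := hρinf ▸ rpow_pos_of_pos hν _
  have hτ : 0 < τ := (mul_pos hα1 hρinf_pos).trans_le hτl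
  have hτ0 : τ ≤ τ0 := by
    have hρinf_le : ρinf ≤ τ0 / α2 := by
      rw [hρinf, one_div, rpow_inv_le_iff_of_pos hν.le (by positivity) (by linarith)]
      exact hνν0
    calc τ ≤ α2 * (τ0 / α2) := hτu.trans (by gcongr)
      _ = τ0 := by field_simp
  have hτ1 : τ ≤ 1 := hτ0.trans ((min_le_left _ _).trans (min_le_left _ _))
  have hbτ : b * τ < 1 := by
    have : τ ≤ 1 / (2 * b) := hτ0.trans ((min_le_left _ _).trans (min_le_right _ _))
    rw [le_div_iff₀ (by positivity)] at this
    linarith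
  have hsmall : (3 + M) * τ ≤ b / 2 := by
    have : τ ≤ b / (2 * (3 + M)) := hτ0.trans (min_le_right _ _)
    rw [le_div_iff₀ (by positivity)] at this
    linarith
  exact coefficient_estimates hγ.le hb hα2 hρinf_pos hτ hτu hτ1 hbτ hsmall hu hv hρ
end

section
/- Let $\mathscr{A}_0,\mathscr{A}_1$ be Banach spaces of functions on $\mathbb{R}$ with norms satisfying $C_1\|u\|_0 \le \big(\sum_{k\in\mathbb{Z}}\|\zeta_k u\|_0^p\big)^{1/p} \le C_2\|u\|_0$ and $\|v\|_1 \ge C_3\big(\sum_{k\in\mathbb{Z}}\|\zeta_k v\|_1^p\big)^{1/p}$ for a fixed smooth partition of unity $\{\zeta_k\}$ subordinate to intervals $((k-1)\delta,(k+1)\delta)$, $p\in[1,\infty)$. Let $\mathscr{P}:\mathscr{A}_1\to\mathscr{A}_0$ be a linear operator defined on compactly supported functions such that for some $\varepsilon>0$ and all integers $m,k$: $\|\zeta_k\mathscr{P}(\zeta_m v)\|_0 \le C\,e^{-|m-k|\varepsilon}\|\zeta_m v\|_1$. Then $\|\mathscr{P}v\|_0 \le C'\|v\|_1$ for all compactly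 supported $v\in\mathscr{A}_1$, with $C'$ independent of $v$. -/
/-!
Write `v = ∑ₘ ζₘ v` and set `K l = C e^{-|l|ε}`. The decay hypothesis bounds every localized
piece of `𝒫v` by a discrete convolution, `‖ζₖ 𝒫v‖₀ ≤ ∑ₘ K(m - k) ‖ζₘ v‖₁`. Convolution with the
summable kernel `K` is bounded on `ℓᵖ` with norm at most `∑ₗ K l` (weighted Hölder in each `k`,
then Fubini), so the two norm-splitting inequalities give `C₁ C₃ ‖𝒫v‖₀ ≤ (∑ₗ K l) ‖v‖₁`.
-/

open Finset Real

theorem summable_exp_neg_abs_mul {ε : ℝ} (hε : 0 < ε) :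
    Summable fun l : ℤ => exp (-((|l| : ℤ) : ℝ) * ε) := by
  have hgeom : Summable fun n : ℕ => exp (-ε) ^ n :=
    summable_geometric_of_lt_one (exp_pos _).le (exp_lt_one_iff.mpr (neg_lt_zero.mpr hε))
  refine Summable.of_nat_of_neg ?_ ?_ <;>
    simpa [← exp_nat_mul, mul_comm] using hgeom

section Convolution

variable {G : Type*} [AddGroup G] {w : G → ℝ} {S : ℝ}

theorem hasSum_sum_mul_sub (hw : HasSum w S) (F : Finset G) (c : G → ℝ) :
    HasSum (fun k => ∑ m ∈ F, w (m - k) * c m) (S * ∑ m ∈ F, c m) := by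
  rw [mul_sum]
  exact hasSum_sum fun m _ => ((Equiv.subLeft m).hasSum_iff.mpr hw).mul_right (c m)

theorem sum_mul_sub_rpow_le (hw : HasSum w S) (hw0 : ∀ l, 0 ≤ w l) {p : ℝ} (hp : 1 ≤ p)
    (F : Finset G) {b : G → ℝ} (hb0 : ∀ m, 0 ≤ b m) (k : G) :
    (∑ m ∈ F, w (m - k) * b m) ^ p ≤ S ^ (p - 1) * ∑ m ∈ F, w (m - k) * b m ^ p := by
  have hp0 : 0 < p := by linarith
  have hW0 : 0 ≤ ∑ m ∈ F, w (m - k) := sum_nonneg fun m _ => hw0 _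
  have hW : ∑ m ∈ F, w (m - k) ≤ S :=
    sum_le_hasSum F (fun _ _ => hw0 _) ((Equiv.subRight k).hasSum_iff.mpr hw)
  have hholder := inner_le_weight_mul_Lp_of_nonneg F hp (fun m => w (m - k)) b
    (fun _ => hw0 _) hb0
  calc (∑ m ∈ F, w (m - k) * b m) ^ p
      ≤ ((∑ m ∈ F, w (m - k)) ^ (1 - p⁻¹) * (∑ m ∈ F, w (m - k) * b m ^ p) ^ p⁻¹) ^ p :=
        rpow_le_rpow (sum_nonneg fun m _ => mul_nonneg (hw0 _) (hb0 m)) hholder hp0.le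
    _ = (∑ m ∈ F, w (m - k)) ^ (p - 1) * ∑ m ∈ F, w (m - k) * b m ^ p := by
        have hY : 0 ≤ ∑ m ∈ F, w (m - k) * b m ^ p :=
          sum_nonneg fun m _ => mul_nonneg (hw0 _) (rpow_nonneg (hb0 m) p)
        rw [mul_rpow (rpow_nonneg hW0 _) (rpow_nonneg hY _), ← rpow_mul hW0, ← rpow_mul hY,
          inv_mul_cancel₀ hp0.ne', rpow_one, sub_mul, one_mul, inv_mul_cancel₀ hp0.ne']
    _ ≤ S ^ (p - 1) * ∑ m ∈ F, w (m - k) * b m ^ p := by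
        gcongr
        exact sum_nonneg fun m _ => mul_nonneg (hw0 _) (rpow_nonneg (hb0 m) p)

/-- Young's inequality `‖w ∗ b‖_p ≤ ‖w‖₁ ‖b‖_p` for a nonnegative kernel. -/
theorem tsum_rpow_rpow_le_of_le_sum_mul_sub (hw : HasSum w S) (hw0 : ∀ l, 0 ≤ w l) {p : ℝ}
    (hp : 1 ≤ p) (F : Finset G) {a b : G → ℝ} (ha0 : ∀ k, 0 ≤ a k) (hb0 : ∀ m, 0 ≤ b m)
    (hab : ∀ k, a k ≤ ∑ m ∈ F, w (m - k) * b m) :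
    (∑' k, a k ^ p) ^ (1 / p) ≤ S * (∑ m ∈ F, b m ^ p) ^ (1 / p) := by
  have hp0 : 0 < p := by linarith
  have hS : 0 ≤ S := hw.nonneg hw0
  have hB : 0 ≤ ∑ m ∈ F, b m ^ p := sum_nonneg fun m _ => rpow_nonneg (hb0 m) p
  have hbound : ∀ k, a k ^ p ≤ S ^ (p - 1) * ∑ m ∈ F, w (m - k) * b m ^ p := fun k =>
    (rpow_le_rpow (ha0 k) (hab k) hp0.le).trans (sum_mul_sub_rpow_le hw hw0 hp F hb0 k)
  have hmajorant := (hasSum_sum_mul_sub hw F (b · ^ p)).mul_left (S ^ (p - 1))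
  have hsum : ∑' k, a k ^ p ≤ S ^ p * ∑ m ∈ F, b m ^ p := by
    have hsummable := hmajorant.summable.of_nonneg_of_le (fun k => rpow_nonneg (ha0 k) p) hbound
    calc ∑' k, a k ^ p ≤ S ^ (p - 1) * (S * ∑ m ∈ F, b m ^ p) :=
          hasSum_le hbound hsummable.hasSum hmajorant
      _ = S ^ p * ∑ m ∈ F, b m ^ p := by
          rw [← mul_assoc, ← rpow_add_one' hS (by linarith), sub_add_cancel]
  calc (∑' k, a k ^ p) ^ (1 / p) ≤ (S ^ p * ∑ m ∈ F, b m ^ p) ^ (1 / p) :=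
        rpow_le_rpow (tsum_nonneg fun k => rpow_nonneg (ha0 k) p) hsum (by positivity)
    _ = S * (∑ m ∈ F, b m ^ p) ^ (1 / p) := by
        rw [mul_rpow (rpow_nonneg hS p) hB, ← rpow_mul hS, mul_one_div_cancel hp0.ne', rpow_one]

end Convolution

theorem stmt_15_general {A0 A1 : Type*}
    [NormedAddCommGroup A0] [NormedSpace ℝ A0]
    [NormedAddCommGroup A1] [NormedSpace ℝ A1]
    (p : ℝ) (hp : 1 ≤ p)
    (Z0 : ℤ → A0 →ₗ[ℝ] A0) (Z1 : ℤ → A1 →ₗ[ℝ] A1)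
    (C1 C3 C ε : ℝ) (hC1 : 0 < C1) (hC3 : 0 < C3) (hC : 0 < C)
    (hε : 0 < ε)
    (hA0lo : ∀ u : A0, C1 * ‖u‖ ≤ (∑' k : ℤ, ‖Z0 k u‖ ^ p) ^ (1 / p))
    (hA1lo : ∀ v : A1, C3 * (∑' k : ℤ, ‖Z1 k v‖ ^ p) ^ (1 / p) ≤ ‖v‖)
    (P : A1 →ₗ[ℝ] A0)
    (hdecay : ∀ (k m : ℤ) (v : A1),
      ‖Z0 k (P (Z1 m v))‖ ≤ C * Real.exp (-((|m - k| : ℤ) : ℝ) * ε) * ‖Z1 m v‖)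
    (hpart : ∀ v : A1, {k : ℤ | Z1 k v ≠ 0}.Finite → ∑ᶠ k : ℤ, Z1 k v = v) :
    ∃ C' > (0 : ℝ), ∀ v : A1, {k : ℤ | Z1 k v ≠ 0}.Finite → ‖P v‖ ≤ C' * ‖v‖ := by
  set K : ℤ → ℝ := fun l => C * exp (-((|l| : ℤ) : ℝ) * ε)
  have hK0 : ∀ l, 0 ≤ K l := fun l => by positivity
  obtain ⟨S, hK⟩ := (summable_exp_neg_abs_mul hε).mul_left C
  have hS : 0 < S := hasSum_lt hK0 (i := 0) (by positivity) hasSum_zero hK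
  refine ⟨S / (C1 * C3), by positivity, fun v hv => ?_⟩
  set F := hv.toFinset
  have hv_sum : ∑ m ∈ F, Z1 m v = v := (finsum_eq_sum _ hv).symm.trans (hpart v hv)
  have hlocal : ∀ k, ‖Z0 k (P v)‖ ≤ ∑ m ∈ F, K (m - k) * ‖Z1 m v‖ := fun k => by
    calc ‖Z0 k (P v)‖ = ‖∑ m ∈ F, Z0 k (P (Z1 m v))‖ := by
          rw [← map_sum, ← map_sum, hv_sum]
      _ ≤ _ := norm_sum_le_of_le F fun m _ => hdecay k m v
  have hZ1 : ∑' m, ‖Z1 m v‖ ^ p = ∑ m ∈ F, ‖Z1 m v‖ ^ p := tsum_eq_sum fun m hm => by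
    rw [hv.mem_toFinset, Set.mem_ofPred_eq, not_not] at hm
    rw [hm, norm_zero, zero_rpow (by linarith)]
  have hyoung := tsum_rpow_rpow_le_of_le_sum_mul_sub hK hK0 hp F (fun _ => norm_nonneg _)
    (fun _ => norm_nonneg _) hlocal
  rw [div_mul_eq_mul_div, le_div_iff₀ (by positivity)]
  calc ‖P v‖ * (C1 * C3) = C3 * (C1 * ‖P v‖) := by ring
    _ ≤ C3 * (S * (∑' m, ‖Z1 m v‖ ^ p) ^ (1 / p)) := by
        rw [hZ1]; exact mul_le_mul_of_nonneg_left ((hA0lo (P v)).trans hyoung) hC3.le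
    _ = S * (C3 * (∑' m, ‖Z1 m v‖ ^ p) ^ (1 / p)) := by ring
    _ ≤ S * ‖v‖ := mul_le_mul_of_nonneg_left (hA1lo v) hS.le

/-- Maz'ya–Plamenevskiĭ localization lemma: if the norms of `𝒜₀, 𝒜₁` split in `ℓᵖ` over a
partition of unity `{ζₖ}` and the linear operator `𝒫` has exponential off-diagonal decay
`‖ζₖ𝒫(ζₘv)‖₀ ≤ C e^{-|m-k|ε}‖ζₘv‖₁`, then `‖𝒫v‖₀ ≤ C'‖v‖₁` for all compactly supported
`v` (modeled as: the family `(ζₖ v)` has finite support and sums to `v`). -/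
theorem stmt_15 {A0 A1 : Type*}
    [NormedAddCommGroup A0] [NormedSpace ℝ A0]
    [NormedAddCommGroup A1] [NormedSpace ℝ A1]
    (p : ℝ) (hp : 1 ≤ p)
    (Z0 : ℤ → A0 →ₗ[ℝ] A0) (Z1 : ℤ → A1 →ₗ[ℝ] A1)
    (C1 C2 C3 C ε : ℝ) (hC1 : 0 < C1) (hC2 : 0 < C2) (hC3 : 0 < C3) (hC : 0 < C)
    (hε : 0 < ε)
    (hA0lo : ∀ u : A0, C1 * ‖u‖ ≤ (∑' k : ℤ, ‖Z0 k u‖ ^ p) ^ (1 / p))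
    (hA0hi : ∀ u : A0, (∑' k : ℤ, ‖Z0 k u‖ ^ p) ^ (1 / p) ≤ C2 * ‖u‖)
    (hA1lo : ∀ v : A1, C3 * (∑' k : ℤ, ‖Z1 k v‖ ^ p) ^ (1 / p) ≤ ‖v‖)
    (P : A1 →ₗ[ℝ] A0)
    (hdecay : ∀ (k m : ℤ) (v : A1),
      ‖Z0 k (P (Z1 m v))‖ ≤ C * Real.exp (-((|m - k| : ℤ) : ℝ) * ε) * ‖Z1 m v‖)
    (hpart : ∀ v : A1, {k : ℤ | Z1 k v ≠ 0}.Finite → ∑ᶠ k : ℤ, Z1 k v = v) :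
    ∃ C' > (0 : ℝ), ∀ v : A1, {k : ℤ | Z1 k v ≠ 0}.Finite → ‖P v‖ ≤ C' * ‖v‖ :=
  stmt_15_general p hp Z0 Z1 C1 C3 C ε hC1 hC3 hC hε hA0lo hA1lo P hdecay hpart
end
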